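/- Let Ω be a properly convex open set, γ ∈ Aut(Ω), and x ∈ Ω. Any accumulation point of the orbit (γⁿ·x)_{n∈ℕ} which lies in ∂Ω and is an extremal point of Ω is a fixed point of γ. -/

import Mathlib

open Set Filter Projectivization MeasureTheory

/-- The real vector space `ℝ^{n+1}` underlying the projective space `P^n`. -/
abbrev PV (n : ℕ) := Fin (n+1) → ℝ

/-- The real projective space `P^n = P(ℝ^{n+1})`. -/
abbrev PS (n : ℕ) := Projectivization ℝ (PV n)

/-- The quotient topology on projective space. -/
noncomputable instance (n : ℕ) : TopologicalSpace (PS n) :=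
  TopologicalSpace.coinduced (Projectivization.mk' ℝ) inferInstance

/-- `SL_{n+1}(ℝ)`, the group of projective transformations of `P^n`. -/
abbrev SL (n : ℕ) := Matrix.SpecialLinearGroup (Fin (n+1)) ℝ

instance (n : ℕ) : TopologicalSpace (SL n) :=
  TopologicalSpace.induced (fun g => (g : Matrix (Fin (n+1)) (Fin (n+1)) ℝ)) inferInstance

/-- The action of `SL_{n+1}(ℝ)` on `P^n` by projective transformations. -/
noncomputable def pact {n : ℕ} (g : SL n) (x : PS n) : PS n :=
  Projectivization.mk ℝ ((g : Matrix (Fin (n+1)) (Fin (n+1)) ℝ).mulVec x.rep) (by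
    intro h
    apply x.rep_nonzero
    have h2 : ((g⁻¹ : SL n) : Matrix (Fin (n+1)) (Fin (n+1)) ℝ).mulVec
        (((g : SL n) : Matrix (Fin (n+1)) (Fin (n+1)) ℝ).mulVec x.rep) = x.rep := by
      rw [Matrix.mulVec_mulVec, ← Matrix.SpecialLinearGroup.coe_mul, inv_mul_cancel,
        Matrix.SpecialLinearGroup.coe_one, Matrix.one_mulVec]
    rw [← h2, h, Matrix.mulVec_zero])

/-- The Funk (asymmetric) distance of a convex set `S` in a real vector space,
expressed through the Minkowski gauge: `F(x,y) = - log (1 - gauge_{S-x}(y-x))`. -/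
noncomputable def funkDist {E : Type*} [AddCommGroup E] [Module ℝ E] (S : Set E) (x y : E) : ℝ :=
  - Real.log (1 - gauge ((fun z => z - x) '' S) (y - x))

/-- The Hilbert (cross-ratio) distance of a convex set `S` in a real vector space:
`d_S(x,y) = (1/2) log ([p:x:y:q])`, equal to the symmetrization of the Funk distance. -/
noncomputable def hilbertDist {E : Type*} [AddCommGroup E] [Module ℝ E] (S : Set E) (x y : E) : ℝ :=
  (funkDist S x y + funkDist S y x) / 2

/-- The affine chart of `P^n` associated with a linear form `f`: the point `x` is sent to
the representative `v` of `x` normalized so that `f v = 1` (well defined whenever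
`f` does not vanish on representatives of `x`). -/
noncomputable def chart {n : ℕ} (f : PV n →ₗ[ℝ] ℝ) (x : PS n) : PV n := (f x.rep)⁻¹ • x.rep

/-- `Ω` is a properly convex open subset of `P^n`, as witnessed by the affine chart given by
`f`: the closure of `Ω` avoids the projective hyperplane `{f = 0}`, and in the affine
chart `{f = 1}`, `Ω` is a bounded convex open set. -/
structure IsPCOWith {n : ℕ} (f : PV n →ₗ[ℝ] ℝ) (Ω : Set (PS n)) : Prop where
  nonempty : Ω.Nonempty
  isOpen : IsOpen Ω
  avoids : ∀ x ∈ closure Ω, f x.rep ≠ 0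
  convex : Convex ℝ (chart f '' Ω)
  bounded : Bornology.IsBounded (chart f '' Ω)

/-- The Hilbert distance on a properly convex open set `Ω ⊆ P^n`, computed in the affine
chart given by `f` (independent of the chart, by projective invariance of the cross-ratio). -/
noncomputable def phdist {n : ℕ} (f : PV n →ₗ[ℝ] ℝ) (Ω : Set (PS n)) (x y : PS n) : ℝ :=
  hilbertDist (chart f '' Ω) (chart f x) (chart f y)

/-- `g` preserves `Ω`, i.e. `g` belongs to `Aut(Ω)`. -/
def InAut {n : ℕ} (g : SL n) (Ω : Set (PS n)) : Prop := pact g '' Ω = Ω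

/-- `Ω` is strictly convex: its boundary `∂Ω` contains no nontrivial segment
(read in the affine chart given by `f`). -/
def StrictlyConvexW {n : ℕ} (f : PV n →ₗ[ℝ] ℝ) (Ω : Set (PS n)) : Prop :=
  ∀ p ∈ frontier Ω, ∀ q ∈ frontier Ω,
    segment ℝ (chart f p) (chart f q) ⊆ chart f '' (frontier Ω) → p = q

/-- `∂Ω` is of class `C¹`: at every boundary point the supporting affine hyperplane of `Ω`
(in the affine chart given by `f`) is unique, i.e. any two supporting linear forms agree up
to positive scaling and adding a multiple of `f`. -/
def C1BoundaryW {n : ℕ} (f : PV n →ₗ[ℝ] ℝ) (Ω : Set (PS n)) : Prop :=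
  ∀ p ∈ frontier Ω, ∀ u v : PV n →ₗ[ℝ] ℝ,
    (∀ y ∈ Ω, u (chart f y) < u (chart f p)) → (∀ y ∈ Ω, v (chart f y) < v (chart f p)) →
    ∃ c d : ℝ, 0 < c ∧ v = c • u + d • f

/-- `p` is an extremal point of `∂Ω`: it is not in the interior of any nontrivial
segment contained in `∂Ω` (read in the affine chart given by `f`). -/
def IsExtremalPointW {n : ℕ} (f : PV n →ₗ[ℝ] ℝ) (Ω : Set (PS n)) (p : PS n) : Prop :=
  p ∈ frontier Ω ∧ ∀ q ∈ frontier Ω, ∀ r ∈ frontier Ω,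
    chart f p ∈ openSegment ℝ (chart f q) (chart f r) → q = r

/-- The translation distance `τ(g) = inf_{x ∈ Ω} d_Ω(x, g x)`. -/
noncomputable def transDist {n : ℕ} (f : PV n →ₗ[ℝ] ℝ) (Ω : Set (PS n)) (g : SL n) : ℝ :=
  ⨅ x : Ω, phdist f Ω x.1 (pact g x.1)

/-- `g` is elliptic: it fixes a point of `Ω`. -/
def IsEllipticW {n : ℕ} (Ω : Set (PS n)) (g : SL n) : Prop := ∃ x ∈ Ω, pact g x = x

/-- `g` is hyperbolic: its translation distance is positive and attained. -/
def IsHyperbolicW {n : ℕ} (f : PV n →ₗ[ℝ] ℝ) (Ω : Set (PS n)) (g : SL n) : Prop :=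
  ∃ m : ℝ, 0 < m ∧ (∀ y ∈ Ω, m ≤ phdist f Ω y (pact g y)) ∧
    ∃ x₀ ∈ Ω, phdist f Ω x₀ (pact g x₀) = m

/-- `g` is parabolic: its translation distance is `0` and is not attained. -/
def IsParabolicW {n : ℕ} (f : PV n →ₗ[ℝ] ℝ) (Ω : Set (PS n)) (g : SL n) : Prop :=
  (∀ y ∈ Ω, 0 < phdist f Ω y (pact g y)) ∧
    ∀ ε : ℝ, 0 < ε → ∃ y ∈ Ω, phdist f Ω y (pact g y) < ε


/-! Draw the chord of `Ω` through `x` and `γ x`; it leaves `Ω` at boundary points `q`, `r`.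
The automorphism `γ^m` maps the four collinear points `q, x, γ x, r` to
`γ^m q, γ^m x, γ^(m+1) x, γ^m r`, preserving their cross-ratio, and in the affine chart the
boundary of `Ω` is compact. Along an ultrafilter on which `γ^m x → p`, the chords converge to a
segment `[A, B]` with `A, B ∈ ∂Ω`, carrying `p` and `γ p` at parameters `ρ, τ ∈ [0, 1]` that
still satisfy the cross-ratio relation. That relation forces `τ = ρ` when `ρ ∈ {0, 1}`;
otherwise `p` lies in the open segment `(A, B)`, and extremality of `p` forces `A = B`.
In both cases `γ p = p`. -/

open Topology
open AffineMap (lineMap lineMap_apply_module lineMap_apply_zero lineMap_apply_one)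
open scoped Matrix

section Normalization

variable {K V : Type*} [Field K] [AddCommGroup V] [Module K V]

theorem Projectivization.mk_smul_eq_mk {v : V} (hv : v ≠ 0) {c : K} (hc : c ≠ 0) :
    mk K (c • v) (smul_ne_zero hc hv) = mk K v hv :=
  (mk_eq_mk_iff K _ _ _ hv).2 ⟨Units.mk0 c hc, rfl⟩

theorem inv_map_smul_smul (f : V →ₗ[K] K) (v : V) {c : K} (hc : c ≠ 0) :
    (f (c • v))⁻¹ • (c • v) = (f v)⁻¹ • v := by
  rw [map_smul, smul_eq_mul, smul_smul, _root_.mul_inv_rev, mul_assoc, inv_mul_cancel₀ hc,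
    mul_one]

theorem map_rep_mk_ne_zero_iff (f : V →ₗ[K] K) {v : V} (hv : v ≠ 0) :
    f (mk K v hv).rep ≠ 0 ↔ f v ≠ 0 := by
  obtain ⟨a, ha⟩ := exists_smul_eq_mk_rep K v hv
  rw [← ha, Units.smul_def, map_smul, smul_eq_mul]
  exact ⟨right_ne_zero_of_mul, mul_ne_zero a.ne_zero⟩

end Normalization

section Chart

variable {n : ℕ} (f : PV n →ₗ[ℝ] ℝ)

theorem chart_mk {v : PV n} (hv : v ≠ 0) : chart f (mk ℝ v hv) = (f v)⁻¹ • v := by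
  obtain ⟨a, ha⟩ := exists_smul_eq_mk_rep ℝ v hv
  rw [chart, ← ha, Units.smul_def, inv_map_smul_smul f v a.ne_zero]

variable {f}

theorem map_chart {y : PS n} (hy : f y.rep ≠ 0) : f (chart f y) = 1 := by
  rw [chart, map_smul, smul_eq_mul, inv_mul_cancel₀ hy]

theorem chart_ne_zero {y : PS n} (hy : f y.rep ≠ 0) : chart f y ≠ 0 := fun h => by
  simpa [h] using map_chart hy

theorem mk_chart {y : PS n} (hy : f y.rep ≠ 0) : mk ℝ (chart f y) (chart_ne_zero hy) = y := by
  simp_rw [chart]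
  rw [mk_smul_eq_mk y.rep_nonzero (inv_ne_zero hy), mk_rep]

theorem chart_injOn : InjOn (chart f) {y : PS n | f y.rep ≠ 0} := fun y hy z hz h => by
  rw [← mk_chart hy, ← mk_chart hz]
  simp_rw [h]

end Chart

section Action

variable {n : ℕ}

theorem Matrix.SpecialLinearGroup.mulVec_ne_zero (g : SL n) {v : PV n} (hv : v ≠ 0) :
    g.1 *ᵥ v ≠ 0 := fun h => hv <| by
  rw [← Matrix.one_mulVec v, ← coe_one, ← inv_mul_cancel g, coe_mul, ← Matrix.mulVec_mulVec, h,
    Matrix.mulVec_zero]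

theorem pact_mk (g : SL n) {v : PV n} (hv : v ≠ 0) :
    pact g (mk ℝ v hv) = mk ℝ (g.1 *ᵥ v) (g.mulVec_ne_zero hv) := by
  obtain ⟨a, ha⟩ := exists_smul_eq_mk_rep ℝ v hv
  simp_rw [pact, ← ha, Units.smul_def, Matrix.mulVec_smul]
  exact mk_smul_eq_mk _ a.ne_zero

theorem pact_mul (g h : SL n) (y : PS n) : pact (g * h) y = pact g (pact h y) := by
  induction y using Projectivization.ind with
  | h v hv => simp_rw [pact_mk, Matrix.SpecialLinearGroup.coe_mul, Matrix.mulVec_mulVec]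

theorem pact_one (y : PS n) : pact 1 y = y := by
  induction y using Projectivization.ind with
  | h v hv => simp_rw [pact_mk, Matrix.SpecialLinearGroup.coe_one, Matrix.one_mulVec]

theorem chart_pact (f : PV n →ₗ[ℝ] ℝ) (g : SL n) {y : PS n} (hy : f y.rep ≠ 0) :
    chart f (pact g y) = (f (g.1 *ᵥ chart f y))⁻¹ • (g.1 *ᵥ chart f y) := by
  rw [pact, chart_mk, chart, Matrix.mulVec_smul, inv_map_smul_smul f _ (inv_ne_zero hy)]

theorem continuous_mk {X : Type*} [TopologicalSpace X] {c : X → PV n} (hc : Continuous c)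
    (hc₀ : ∀ t, c t ≠ 0) : Continuous fun t => mk ℝ (c t) (hc₀ t) :=
  continuous_coinduced_rng.comp (hc.subtype_mk hc₀)

theorem exists_continuous_chart_eq (f : PV n →ₗ[ℝ] ℝ) {X : Type*} [TopologicalSpace X]
    {w : X → PV n} (hw : Continuous w) (hfw : ∀ t, f (w t) = 1) :
    ∃ c : X → PS n, Continuous c ∧ (∀ t, f (c t).rep ≠ 0) ∧ ∀ t, chart f (c t) = w t := by
  have hw₀ : ∀ t, w t ≠ 0 := fun t h => by simpa [h] using hfw t
  exact ⟨fun t => mk ℝ (w t) (hw₀ t), continuous_mk hw hw₀,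
    fun t => (map_rep_mk_ne_zero_iff f _).2 (by simp [hfw t]), fun t => by simp [chart_mk, hfw t]⟩

theorem continuous_pact (g : SL n) : Continuous (pact g) := by
  refine continuous_coinduced_dom.2 ?_
  simp_rw [Function.comp_def, mk'_eq_mk, pact_mk]
  exact continuous_mk ((Matrix.mulVecLin g.1).continuous_of_finiteDimensional.comp
    continuous_subtype_val) _

noncomputable def pactHomeomorph (g : SL n) : PS n ≃ₜ PS n where
  toFun := pact g
  invFun := pact g⁻¹
  left_inv y := by rw [← pact_mul, inv_mul_cancel, pact_one]
  right_inv y := by rw [← pact_mul, mul_inv_cancel, pact_one]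
  continuous_toFun := continuous_pact g
  continuous_invFun := continuous_pact g⁻¹

theorem isOpen_setOf_chart_mem (f : PV n →ₗ[ℝ] ℝ) {s : Set (PV n)} (hs : IsOpen s) :
    IsOpen {y : PS n | f y.rep ≠ 0 ∧ chart f y ∈ s} := by
  have hf : Continuous f := f.continuous_of_finiteDimensional
  have hpre : mk' ℝ ⁻¹' {y : PS n | f y.rep ≠ 0 ∧ chart f y ∈ s} =
      Subtype.val ⁻¹' ({v | f v ≠ 0} ∩ (fun v => (f v)⁻¹ • v) ⁻¹' s) := by
    ext ⟨v, hv⟩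
    simp [mk'_eq_mk, map_rep_mk_ne_zero_iff, chart_mk]
  refine isOpen_coinduced.2 (hpre ▸ IsOpen.preimage continuous_subtype_val ?_)
  exact ((hf.continuousOn.inv₀ fun _ h => h).smul continuousOn_id).isOpen_inter_preimage
    (isOpen_ne_fun hf continuous_const) hs

theorem continuousAt_chart {f : PV n →ₗ[ℝ] ℝ} {y : PS n} (hy : f y.rep ≠ 0) :
    ContinuousAt (chart f) y :=
  tendsto_nhds.2 fun _ hs hys =>
    mem_of_superset ((isOpen_setOf_chart_mem f hs).mem_nhds ⟨hy, hys⟩) fun _ h => h.2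

end Action

section Automorphisms

variable {n : ℕ} {Ω : Set (PS n)} {g : SL n}

theorem InAut.mapsTo (hg : InAut g Ω) : MapsTo (pact g) Ω Ω := fun _ hy =>
  hg ▸ mem_image_of_mem _ hy

theorem InAut.mapsTo_closure (hg : InAut g Ω) : MapsTo (pact g) (closure Ω) (closure Ω) :=
  fun _ hy => hg ▸ (pactHomeomorph g).image_closure Ω ▸ mem_image_of_mem _ hy

theorem InAut.mapsTo_frontier (hg : InAut g Ω) : MapsTo (pact g) (frontier Ω) (frontier Ω) :=
  fun _ hy => hg ▸ (pactHomeomorph g).image_frontier Ω ▸ mem_image_of_mem _ hy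

theorem InAut.pow (hg : InAut g Ω) : ∀ m : ℕ, InAut (g ^ m) Ω
  | 0 => by simp [InAut, pact_one]
  | m + 1 => by
    rw [InAut, pow_succ]
    simp_rw [pact_mul]
    rw [← image_image, hg, hg.pow m]

end Automorphisms

section RealLine

theorem div_pos_of_continuousOn_of_ne_zero {g : ℝ → ℝ} {a b u v : ℝ}
    (hg : ContinuousOn g (Icc a b)) (hne : ∀ t ∈ Icc a b, g t ≠ 0) (hu : u ∈ Icc a b)
    (hv : v ∈ Icc a b) : 0 < g u / g v := by
  by_contra h
  obtain ⟨t, ht, ht0⟩ : (0 : ℝ) ∈ g '' uIcc u v := by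
    refine intermediate_value_uIcc (hg.mono (uIcc_subset_Icc hu hv)) (mem_uIcc.2 ?_)
    rcases (hne u hu).lt_or_gt with hu' | hu' <;> rcases (hne v hv).lt_or_gt with hv' | hv'
    · exact absurd (div_pos_of_neg_of_neg hu' hv') h
    · exact Or.inl ⟨hu'.le, hv'.le⟩
    · exact Or.inr ⟨hv'.le, hu'.le⟩
    · exact absurd (div_pos hu' hv') h
  exact hne t (uIcc_subset_Icc hu hv ht) ht0

theorem IsOpen.eq_Ioo_csInf_csSup {α : Type*} [ConditionallyCompleteLinearOrder α]
    [TopologicalSpace α] [OrderTopology α] [DenselyOrdered α] [NoMinOrder α] [NoMaxOrder α]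
    {I : Set α} (hI : IsOpen I) (hc : I.OrdConnected) (hb : BddBelow I) (ha : BddAbove I)
    (hne : I.Nonempty) : I = Ioo (sInf I) (sSup I) :=
  le_antisymm
    (calc I = interior I := hI.interior_eq.symm
      _ ⊆ interior (Icc (sInf I) (sSup I)) := interior_mono (subset_Icc_csInf_csSup hb ha)
      _ = Ioo (sInf I) (sSup I) := interior_Icc)
    (IsConnected.Ioo_csInf_csSup_subset ⟨hne, hc.isPreconnected⟩ hb ha)

variable {X : Type*} [TopologicalSpace X] {Ω : Set X} {c : ℝ → X} {a b : ℝ}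

theorem Continuous.mapsTo_Icc_closure_of_preimage_eq_Ioo (hc : Continuous c) (hab : a < b)
    (h : c ⁻¹' Ω = Ioo a b) : MapsTo c (Icc a b) (closure Ω) := fun t ht => by
  rw [← closure_Ioo hab.ne, ← h] at ht
  exact map_mem_closure hc ht fun _ h => h

theorem IsOpen.endpoints_mem_frontier_of_preimage_eq_Ioo (hΩ : IsOpen Ω) (hc : Continuous c)
    (hab : a < b) (h : c ⁻¹' Ω = Ioo a b) : c a ∈ frontier Ω ∧ c b ∈ frontier Ω := by
  have hcl := hc.mapsTo_Icc_closure_of_preimage_eq_Ioo hab h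
  rw [hΩ.frontier_eq]
  refine ⟨⟨hcl (left_mem_Icc.2 hab.le), fun ha => ?_⟩, ⟨hcl (right_mem_Icc.2 hab.le), fun hb => ?_⟩⟩
  · simpa using (h ▸ mem_preimage.2 ha : a ∈ Ioo a b)
  · simpa using (h ▸ mem_preimage.2 hb : b ∈ Ioo a b)

theorem isBounded_preimage_lineMap {E : Type*} [NormedAddCommGroup E] [NormedSpace ℝ E]
    {x y : E} (hxy : x ≠ y) {S : Set E} (hS : Bornology.IsBounded S) :
    Bornology.IsBounded (lineMap (k := ℝ) x y ⁻¹' S) :=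
  (AntilipschitzWith.of_le_mul_dist (K := (nndist x y)⁻¹) fun s t => by
    rw [dist_lineMap_lineMap, NNReal.coe_inv, coe_nndist, mul_comm (dist s t), ← mul_assoc,
      inv_mul_cancel₀ (dist_ne_zero.2 hxy), one_mul]).isBounded_preimage hS

end RealLine

section SegmentReparam

variable {V : Type*} [AddCommGroup V] [Module ℝ V] (f : V →ₗ[ℝ] ℝ) {A B : V} {s s' : ℝ}

theorem LinearMap.map_lineMap_eq : f (lineMap A B s) = (1 - s) * f A + s * f B := by
  simp [lineMap_apply_module]

/-- The parameter on `[(f A)⁻¹ • A, (f B)⁻¹ • B]` of the image of `lineMap A B s` under the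
central projection `w ↦ (f w)⁻¹ • w`. -/
noncomputable def segmentReparam (A B : V) (s : ℝ) : ℝ := s * f B / f (lineMap A B s)

variable {f}

theorem inv_smul_lineMap (hA : f A ≠ 0) (hB : f B ≠ 0) (hs : f (lineMap A B s) ≠ 0) :
    (f (lineMap A B s))⁻¹ • lineMap A B s =
      lineMap ((f A)⁻¹ • A) ((f B)⁻¹ • B) (segmentReparam f A B s) := by
  rw [segmentReparam, f.map_lineMap_eq] at *
  simp only [lineMap_apply_module]
  match_scalars <;> field_simp
  ring

theorem one_sub_segmentReparam (hs : f (lineMap A B s) ≠ 0) :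
    1 - segmentReparam f A B s = (1 - s) * f A / f (lineMap A B s) := by
  rw [segmentReparam, f.map_lineMap_eq] at *
  field_simp
  ring

/-- The cross-ratio of `0, s, s', 1` is preserved by the reparametrization. -/
theorem segmentReparam_cross (hs : f (lineMap A B s) ≠ 0) (hs' : f (lineMap A B s') ≠ 0) :
    s * (1 - s') * (segmentReparam f A B s' * (1 - segmentReparam f A B s)) =
      s' * (1 - s) * (segmentReparam f A B s * (1 - segmentReparam f A B s')) := by
  rw [one_sub_segmentReparam hs, one_sub_segmentReparam hs', segmentReparam, segmentReparam]
  ring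

theorem segmentReparam_mem_Icc (hne : ∀ u ∈ Icc (0 : ℝ) 1, f (lineMap A B u) ≠ 0)
    (hs : s ∈ Icc (0 : ℝ) 1) : segmentReparam f A B s ∈ Icc (0 : ℝ) 1 := by
  have hcont : ContinuousOn (fun u : ℝ => f (lineMap A B u)) (Icc 0 1) := by
    simp_rw [f.map_lineMap_eq]
    fun_prop
  have hsign : ∀ u ∈ Icc (0 : ℝ) 1, 0 < f (lineMap A B u) / f (lineMap A B s) := fun u hu =>
    div_pos_of_continuousOn_of_ne_zero hcont hne hu hs
  have h0 := hsign 0 (left_mem_Icc.2 zero_le_one)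
  have h1 := hsign 1 (right_mem_Icc.2 zero_le_one)
  rw [lineMap_apply_zero] at h0
  rw [lineMap_apply_one] at h1
  refine ⟨?_, sub_nonneg.1 ?_⟩
  · rw [segmentReparam, mul_div_assoc]
    exact mul_nonneg hs.1 h1.le
  · rw [one_sub_segmentReparam (hne s hs), mul_div_assoc]
    exact mul_nonneg (sub_nonneg.2 hs.2) h0.le

theorem lineMap_eq_lineMap_of_cross {ρ τ c₁ c₂ : ℝ} (hc₁ : 0 < c₁) (hc₂ : 0 < c₂)
    (hcr : c₁ * (τ * (1 - ρ)) = c₂ * (ρ * (1 - τ))) (hρ : ρ ∈ Icc (0 : ℝ) 1)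
    (hAB : ρ ∈ Ioo (0 : ℝ) 1 → A = B) : lineMap A B ρ = lineMap A B τ := by
  by_cases hρ' : ρ ∈ Ioo (0 : ℝ) 1
  · simp [hAB hρ']
  obtain rfl | rfl : ρ = 0 ∨ ρ = 1 := by
    rw [mem_Ioo, not_and_or, not_lt, not_lt] at hρ'
    rcases hρ' with h | h
    exacts [Or.inl (le_antisymm h hρ.1), Or.inr (le_antisymm hρ.2 h)]
  · simp only [sub_zero, mul_one, zero_mul, mul_zero, mul_eq_zero, hc₁.ne', false_or] at hcr
    rw [hcr]
  · simp only [sub_self, mul_zero, one_mul, zero_eq_mul, hc₂.ne', false_or, sub_eq_zero] at hcr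
    rw [← hcr]

end SegmentReparam

theorem Matrix.mulVec_lineMap {m k R : Type*} [Fintype k] [CommRing R] (M : Matrix m k R)
    (A B : k → R) (s : R) : M *ᵥ lineMap A B s = lineMap (M *ᵥ A) (M *ᵥ B) s := by
  simp [lineMap_apply_module, Matrix.mulVec_add, Matrix.mulVec_smul]

section ProperlyConvex

variable {n : ℕ} {f : PV n →ₗ[ℝ] ℝ} {Ω : Set (PS n)}

theorem IsPCOWith.injOn_chart (hΩ : IsPCOWith f Ω) : InjOn (chart f) (closure Ω) :=
  chart_injOn.mono fun y hy => hΩ.avoids y hy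

theorem IsPCOWith.chart_image_closure_subset (hΩ : IsPCOWith f Ω) :
    chart f '' closure Ω ⊆ closure (chart f '' Ω) := by
  rintro _ ⟨y, hy, rfl⟩
  exact (continuousAt_chart (hΩ.avoids y hy)).continuousWithinAt.mem_closure_image hy

theorem IsPCOWith.isCompact_chart_image_frontier (hΩ : IsPCOWith f Ω) :
    IsCompact (chart f '' frontier Ω) := by
  obtain ⟨c, hc, hc₀, hcw⟩ := exists_continuous_chart_eq f
    (continuous_subtype_val (p := fun w : PV n => f w = 1)) Subtype.prop
  have heq : chart f '' frontier Ω = Subtype.val '' (c ⁻¹' frontier Ω) := by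
    ext w
    constructor
    · rintro ⟨y, hy, rfl⟩
      have hy₀ := hΩ.avoids y (frontier_subset_closure hy)
      refine ⟨⟨chart f y, map_chart hy₀⟩, ?_, rfl⟩
      rwa [mem_preimage, chart_injOn (hc₀ _) hy₀ (hcw _)]
    · rintro ⟨w, hw, rfl⟩
      exact ⟨c w, hw, hcw w⟩
  refine Metric.isCompact_of_isClosed_isBounded ?_ ?_
  · rw [heq]
    exact (isClosed_eq f.continuous_of_finiteDimensional continuous_const).isClosedMap_subtype_val
      _ (isClosed_frontier.preimage hc)
  · exact hΩ.bounded.closure.subset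
      ((image_mono frontier_subset_closure).trans hΩ.chart_image_closure_subset)

theorem IsPCOWith.exists_chord (hΩ : IsPCOWith f Ω) {x y : PS n} (hx : x ∈ Ω) (hy : y ∈ Ω)
    (hxy : x ≠ y) :
    ∃ q ∈ frontier Ω, ∃ r ∈ frontier Ω, ∃ s ∈ Ioo (0 : ℝ) 1, ∃ s' ∈ Ioo (0 : ℝ) 1,
      chart f x = lineMap (chart f q) (chart f r) s ∧
      chart f y = lineMap (chart f q) (chart f r) s' ∧
      segment ℝ (chart f q) (chart f r) ⊆ chart f '' closure Ω := by
  have hx₀ := hΩ.avoids x (subset_closure hx)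
  have hy₀ := hΩ.avoids y (subset_closure hy)
  set L : ℝ →ᵃ[ℝ] PV n := lineMap (chart f x) (chart f y)
  obtain ⟨c, hc, hc₀, hcL⟩ := exists_continuous_chart_eq f (w := L) AffineMap.lineMap_continuous
    fun _ => by simp [L, f.map_lineMap_eq, map_chart hx₀, map_chart hy₀]
  have hc_eq : ∀ t {z : PS n}, f z.rep ≠ 0 → chart f z = L t → c t = z := fun t z hz h =>
    chart_injOn (hc₀ t) hz ((hcL t).trans h.symm)
  have hI : c ⁻¹' Ω = L ⁻¹' (chart f '' Ω) := by
    ext t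
    refine ⟨fun ht => ⟨c t, ht, hcL t⟩, ?_⟩
    rintro ⟨z, hz, hzt⟩
    exact mem_preimage.2 ((hc_eq t (hΩ.avoids z (subset_closure hz)) hzt).symm ▸ hz)
  have hIb : Bornology.IsBounded (c ⁻¹' Ω) := hI ▸ isBounded_preimage_lineMap
    (fun h => hxy (hΩ.injOn_chart (subset_closure hx) (subset_closure hy) h)) hΩ.bounded
  have hI0 : (0 : ℝ) ∈ c ⁻¹' Ω := mem_preimage.2 ((hc_eq 0 hx₀ (by simp [L])) ▸ hx)
  have hI1 : (1 : ℝ) ∈ c ⁻¹' Ω := mem_preimage.2 ((hc_eq 1 hy₀ (by simp [L])) ▸ hy)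
  set a := sInf (c ⁻¹' Ω)
  set b := sSup (c ⁻¹' Ω)
  have hIab : c ⁻¹' Ω = Ioo a b := (hΩ.isOpen.preimage hc).eq_Ioo_csInf_csSup
    (hI ▸ (hΩ.convex.affine_preimage L).ordConnected) hIb.bddBelow hIb.bddAbove ⟨0, hI0⟩
  have ha : a < 0 := (hIab ▸ hI0).1
  have hb : 1 < b := (hIab ▸ hI1).2
  have hab : a < b := ha.trans (zero_lt_one.trans hb)
  have hlineMap : ∀ u, lineMap a b ((u - a) / (b - a)) = u := fun u => by
    rw [AffineMap.lineMap_apply_ring', div_mul_cancel₀ _ (sub_pos.2 hab).ne', sub_add_cancel]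
  obtain ⟨hfa, hfb⟩ := hΩ.isOpen.endpoints_mem_frontier_of_preimage_eq_Ioo hc hab hIab
  refine ⟨c a, hfa, c b, hfb,
    (0 - a) / (b - a), ⟨by apply div_pos <;> linarith, by rw [div_lt_one] <;> linarith⟩,
    (1 - a) / (b - a), ⟨by apply div_pos <;> linarith, by rw [div_lt_one] <;> linarith⟩, ?_, ?_, ?_⟩
  · rw [hcL, hcL, ← AffineMap.apply_lineMap, hlineMap]
    simp [L]
  · rw [hcL, hcL, ← AffineMap.apply_lineMap, hlineMap]
    simp [L]
  · rw [hcL, hcL, ← image_segment, segment_eq_Icc hab.le]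
    rintro _ ⟨t, ht, rfl⟩
    exact ⟨c t, hc.mapsTo_Icc_closure_of_preimage_eq_Ioo hab hIab ht, hcL t⟩

variable {g : SL n}

theorem IsPCOWith.map_mulVec_ne_zero (hΩ : IsPCOWith f Ω) (hg : InAut g Ω) {w : PV n}
    (hw : w ∈ chart f '' closure Ω) : f (g.1 *ᵥ w) ≠ 0 := by
  obtain ⟨y, hy, rfl⟩ := hw
  have h := hΩ.avoids _ (hg.mapsTo_closure hy)
  rwa [← mk_chart (hΩ.avoids y hy), pact_mk, map_rep_mk_ne_zero_iff] at h

theorem IsPCOWith.map_lineMap_mulVec_ne_zero (hΩ : IsPCOWith f Ω) (hg : InAut g Ω)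
    {Q R : PV n} (hQR : segment ℝ Q R ⊆ chart f '' closure Ω) {u : ℝ} (hu : u ∈ Icc (0 : ℝ) 1) :
    f (lineMap (g.1 *ᵥ Q) (g.1 *ᵥ R) u) ≠ 0 := by
  rw [← Matrix.mulVec_lineMap]
  exact hΩ.map_mulVec_ne_zero hg (hQR (segment_eq_image_lineMap ℝ Q R ▸ mem_image_of_mem _ hu))

theorem IsPCOWith.chart_pact_of_eq_lineMap (hΩ : IsPCOWith f Ω) (hg : InAut g Ω)
    {q r z : PS n} (hq : q ∈ closure Ω) (hr : r ∈ closure Ω) (hz : z ∈ closure Ω)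
    (hqr : segment ℝ (chart f q) (chart f r) ⊆ chart f '' closure Ω) {s : ℝ}
    (hs : s ∈ Icc (0 : ℝ) 1) (hzs : chart f z = lineMap (chart f q) (chart f r) s) :
    chart f (pact g z) = lineMap (chart f (pact g q)) (chart f (pact g r))
      (segmentReparam f (g.1 *ᵥ chart f q) (g.1 *ᵥ chart f r) s) := by
  have hne := fun u => hΩ.map_lineMap_mulVec_ne_zero hg hqr (u := u)
  rw [chart_pact f g (hΩ.avoids z hz), chart_pact f g (hΩ.avoids q hq),
    chart_pact f g (hΩ.avoids r hr), hzs, Matrix.mulVec_lineMap]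
  exact inv_smul_lineMap (by simpa using hne 0 (left_mem_Icc.2 zero_le_one))
    (by simpa using hne 1 (right_mem_Icc.2 zero_le_one)) (hne s hs)

theorem IsPCOWith.exists_tendsto_orbit_chord (hΩ : IsPCOWith f Ω) {γ : SL n} (hγ : InAut γ Ω)
    {x y : PS n} (hx : x ∈ Ω) (hy : y ∈ Ω) (hxy : x ≠ y) (U : Ultrafilter ℕ) :
    ∃ A ∈ chart f '' frontier Ω, ∃ B ∈ chart f '' frontier Ω, ∃ ρ ∈ Icc (0 : ℝ) 1,
      ∃ τ c₁ c₂ : ℝ, 0 < c₁ ∧ 0 < c₂ ∧ c₁ * (τ * (1 - ρ)) = c₂ * (ρ * (1 - τ)) ∧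
      Tendsto (fun m => chart f (pact (γ ^ m) x)) U (𝓝 (lineMap A B ρ)) ∧
      Tendsto (fun m => chart f (pact (γ ^ m) y)) U (𝓝 (lineMap A B τ)) := by
  obtain ⟨q, hq, r, hr, s, hs, s', hs', hxs, hys, hqr⟩ := hΩ.exists_chord hx hy hxy
  set c₁ := s * (1 - s')
  set c₂ := s' * (1 - s)
  have hS := hΩ.isCompact_chart_image_frontier
  -- chords with endpoints on `∂Ω` and two marked points in the cross-ratio of `x, y` on `[q, r]`
  let K : Set (PV n × PV n × ℝ × ℝ) :=
    ((chart f '' frontier Ω) ×ˢ (chart f '' frontier Ω) ×ˢ Icc 0 1 ×ˢ Icc 0 1) ∩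
      {z | c₁ * (z.2.2.2 * (1 - z.2.2.1)) = c₂ * (z.2.2.1 * (1 - z.2.2.2))}
  have hK : IsCompact K := (hS.prod (hS.prod (isCompact_Icc.prod isCompact_Icc))).inter_right
    (isClosed_eq (by fun_prop) (by fun_prop))
  let σ : ℕ → ℝ → ℝ := fun m =>
    segmentReparam f ((γ ^ m).1 *ᵥ chart f q) ((γ ^ m).1 *ᵥ chart f r)
  let z : ℕ → PV n × PV n × ℝ × ℝ := fun m =>
    (chart f (pact (γ ^ m) q), chart f (pact (γ ^ m) r), σ m s, σ m s')
  have hzK : ∀ m, z m ∈ K := fun m => by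
    have hne := fun u => hΩ.map_lineMap_mulVec_ne_zero (hγ.pow m) hqr (u := u)
    exact ⟨⟨mem_image_of_mem _ ((hγ.pow m).mapsTo_frontier hq),
      mem_image_of_mem _ ((hγ.pow m).mapsTo_frontier hr),
      segmentReparam_mem_Icc hne (Ioo_subset_Icc_self hs),
      segmentReparam_mem_Icc hne (Ioo_subset_Icc_self hs')⟩,
      segmentReparam_cross (hne s (Ioo_subset_Icc_self hs)) (hne s' (Ioo_subset_Icc_self hs'))⟩
  obtain ⟨⟨A, B, ρ, τ⟩, ⟨⟨hA, hB, hρ, -⟩, hcr⟩, hlim⟩ :=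
    hK.ultrafilter_le_nhds (U.map z) (le_principal_iff.2 (mem_map.2 (univ_mem' hzK)))
  have hchart : ∀ {w : PS n} {t : ℝ}, w ∈ Ω → t ∈ Ioo (0 : ℝ) 1 →
      chart f w = lineMap (chart f q) (chart f r) t → ∀ m,
      chart f (pact (γ ^ m) w) = lineMap (z m).1 (z m).2.1 (σ m t) := fun hw ht hwt m =>
    hΩ.chart_pact_of_eq_lineMap (hγ.pow m) (frontier_subset_closure hq)
      (frontier_subset_closure hr) (subset_closure hw) hqr (Ioo_subset_Icc_self ht) hwt
  refine ⟨A, hA, B, hB, ρ, hρ, τ, c₁, c₂, mul_pos hs.1 (sub_pos.2 hs'.2),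
    mul_pos hs'.1 (sub_pos.2 hs.2), hcr, ?_, ?_⟩
  · exact (((by fun_prop : Continuous fun z : PV n × PV n × ℝ × ℝ =>
      lineMap z.1 z.2.1 z.2.2.1).tendsto _).comp hlim).congr fun m => (hchart hx hs hxs m).symm
  · exact (((by fun_prop : Continuous fun z : PV n × PV n × ℝ × ℝ =>
      lineMap z.1 z.2.1 z.2.2.2).tendsto _).comp hlim).congr fun m => (hchart hy hs' hys m).symm

end ProperlyConvex

/-- Any accumulation point of an orbit `(γ^m · x)` which lies in `∂Ω` and is an extremal
point of `Ω` is a fixed point of `γ`. -/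
theorem extremal_accumulation_point_is_fixed (n : ℕ) (f : PV n →ₗ[ℝ] ℝ)
    (Ω : Set (PS n)) (hΩ : IsPCOWith f Ω) (γ : SL n) (hγ : InAut γ Ω)
    (x : PS n) (hx : x ∈ Ω) (p : PS n)
    (hacc : MapClusterPt p atTop (fun m : ℕ => pact (γ ^ m) x))
    (hfr : p ∈ frontier Ω) (hext : IsExtremalPointW f Ω p) :
    pact γ p = p := by
  obtain ⟨U, -, hU⟩ := mapClusterPt_iff_ultrafilter.mp hacc
  have hp : p ∈ closure Ω := frontier_subset_closure hfr
  have hγp : pact γ p ∈ closure Ω := hγ.mapsTo_closure hp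
  have hxlim : Tendsto (fun m => chart f (pact (γ ^ m) x)) U (𝓝 (chart f p)) :=
    (continuousAt_chart (hΩ.avoids p hp)).tendsto.comp hU
  have hγxlim : Tendsto (fun m => chart f (pact (γ ^ m) (pact γ x))) U
      (𝓝 (chart f (pact γ p))) := by
    simp_rw [← pact_mul, ← pow_succ, pow_succ', pact_mul]
    exact (continuousAt_chart (hΩ.avoids _ hγp)).tendsto.comp
      (((continuous_pact γ).tendsto p).comp hU)
  refine hΩ.injOn_chart hγp hp ?_
  by_cases hfix : pact γ x = x
  · rw [hfix] at hγxlim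
    exact tendsto_nhds_unique hγxlim hxlim
  obtain ⟨A, hA, B, hB, ρ, hρ, τ, c₁, c₂, hc₁, hc₂, hcr, hAρ, hBτ⟩ :=
    hΩ.exists_tendsto_orbit_chord hγ hx (hγ.mapsTo hx) (Ne.symm hfix) U
  rw [tendsto_nhds_unique hγxlim hBτ, tendsto_nhds_unique hxlim hAρ]
  refine (lineMap_eq_lineMap_of_cross hc₁ hc₂ hcr hρ fun hρ' => ?_).symm
  obtain ⟨q, hq, rfl⟩ := hA
  obtain ⟨r, hr, rfl⟩ := hB
  rw [hext.2 q hq r hr (tendsto_nhds_unique hxlim hAρ ▸ lineMap_mem_openSegment ℝ _ _ hρ')]
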